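/- arXiv:1809.10767 — 4 statements merged into one kernel-verified Lean document; each statement's English description precedes it below -/
import Mathlib

section
/- Let G be a connected graph on n vertices. Then SW_3(G) ≥ ((n-2)/2) · W(G), with equality if and only if G is a modular graph. -/
/-- The Steiner distance of a set `S` of vertices of `G`: the minimum number of edges
of a connected subgraph of `G` containing all vertices of `S`. -/
noncomputable def steinerDist {V : Type*} (G : SimpleGraph V) (S : Set V) : ℕ :=
  sInf {n | ∃ H : G.Subgraph, H.Connected ∧ S ⊆ H.verts ∧ H.edgeSet.ncard = n}
/-- The Wiener index of `G`: the sum of distances over all unordered pairs of vertices. -/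
noncomputable def wienerIndex {V : Type*} (G : SimpleGraph V) [Fintype V] : ℕ :=
  ∑ p ∈ (Finset.univ : Finset V).sym2,
    Sym2.lift ⟨fun u v => G.dist u v, fun _ _ => SimpleGraph.dist_comm⟩ p
/-- The Steiner `k`-Wiener index of `G`: the sum of the Steiner distances of all
`k`-element subsets of vertices of `G`. -/
noncomputable def steinerWiener {V : Type*} (G : SimpleGraph V) [Fintype V] (k : ℕ) : ℕ :=
  ∑ S ∈ (Finset.univ : Finset V).powersetCard k, steinerDist G (S : Set V)
/-- The interval `I(u,v)`: the set of all vertices lying on shortest `u,v`-paths. -/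
def interval {V : Type*} (G : SimpleGraph V) (u v : V) : Set V :=
  {x | G.dist u x + G.dist x v = G.dist u v}
/-- A graph `G` is modular if for every three vertices `x, y, z` some vertex lies
simultaneously on shortest paths between every two of them. -/
def IsModular {V : Type*} (G : SimpleGraph V) : Prop :=
  ∀ x y z : V, (interval G x y ∩ interval G x z ∩ interval G y z).Nonempty

/-!
A minimum connected subgraph `H` spanning three vertices `u, v, w` contains a vertex `x` with
`d(u,x) + d(v,x) + d(w,x) ≤ |E(H)|`: walk along a geodesic `P` from `u` to `v` and let `x` be the
first vertex of `P` met by a geodesic from `w`. The triangle inequality through `x` then gives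
`d(u,v) + d(u,w) + d(v,w) ≤ 2 d({u,v,w})`, with equality exactly when `x` lies on shortest paths
between any two of `u, v, w`; conversely such an `x` yields a spanning subgraph with
`d(u,x) + d(v,x) + d(w,x)` edges. Summing over all triples, every pair of vertices lies in `n - 2`
of them, so the left-hand sides add up to `(n - 2) W(G)`.
-/

open SimpleGraph

theorem List.Nodup.length_le_ncard {α : Type*} {l : List α} {s : Set α} (hl : l.Nodup)
    (hs : s.Finite) (h : ∀ a ∈ l, a ∈ s) : l.length ≤ s.ncard := by
  classical
  rw [← List.toFinset_card_of_nodup hl, ← Set.ncard_coe_finset]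
  exact Set.ncard_le_ncard (fun a ha => h a (by simpa using ha)) hs

namespace SimpleGraph

variable {V : Type*} {G : SimpleGraph V}

theorem Walk.ncard_edgeSet_le_length {u v : V} (p : G.Walk u v) :
    p.edgeSet.ncard ≤ p.length := by
  classical
  calc p.edgeSet.ncard = (p.edges.toFinset : Set (Sym2 V)).ncard := by
        congr 1; ext; simp [Walk.mem_edgeSet]
    _ ≤ p.edges.length := (Set.ncard_coe_finset _).trans_le (List.toFinset_card_le _)
    _ = p.length := p.length_edges

theorem Walk.exists_sublist_walk_to_first (P : V → Prop) {a b : V} (q : G.Walk a b) (hb : P b) :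
    ∃ (x : V) (r : G.Walk a x), P x ∧ (∀ y ∈ r.support, P y → y = x) ∧
      r.edges.Sublist q.edges := by
  induction q with
  | nil => exact ⟨_, Walk.nil, hb, by simp +contextual, by simp⟩
  | @cons a c b h q ih =>
    by_cases ha : P a
    · exact ⟨a, Walk.nil, ha, by simp +contextual, List.nil_sublist _⟩
    obtain ⟨x, r, hx, hfirst, hsub⟩ := ih hb
    refine ⟨x, Walk.cons h r, hx, ?_, hsub.cons_cons _⟩
    rintro y hy hPy
    rcases List.mem_cons.mp (Walk.support_cons h r ▸ hy) with rfl | hy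
    · exact absurd hPy ha
    · exact hfirst y hy hPy

theorem Reachable.dist_map_le {W : Type*} {G' : SimpleGraph W} (f : G →g G') {a b : V}
    (h : G.Reachable a b) : G'.dist (f a) (f b) ≤ G.dist a b := by
  obtain ⟨p, hp⟩ := h.exists_walk_length_eq_dist
  simpa [hp] using dist_le (p.map f)

theorem Connected.exists_dist_add_dist_add_dist_le_ncard_edgeSet [Finite V] (hG : G.Connected)
    (u v w : V) : ∃ x, G.dist u x + G.dist v x + G.dist w x ≤ G.edgeSet.ncard := by
  classical
  obtain ⟨p, hp, -⟩ := (hG.preconnected u v).exists_path_of_dist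
  obtain ⟨q, hq, -⟩ := (hG.preconnected w u).exists_path_of_dist
  obtain ⟨x, r, hxp, hfirst, hsub⟩ :=
    q.exists_sublist_walk_to_first (· ∈ p.support) p.start_mem_support
  have hdisj : ∀ e ∈ p.edges, e ∉ r.edges := by
    intro e hep her
    induction e with
    | h y z =>
      have hy := hfirst y (r.fst_mem_support_of_mem_edges her)
        (p.fst_mem_support_of_mem_edges hep)
      have hz := hfirst z (r.snd_mem_support_of_mem_edges her)
        (p.snd_mem_support_of_mem_edges hep)
      exact (p.adj_of_mem_edges hep).ne (hy.trans hz.symm)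
  have hlen : p.length + r.length ≤ G.edgeSet.ncard := by
    rw [← p.length_edges, ← r.length_edges, ← List.length_append]
    refine List.Nodup.length_le_ncard ?_ (Set.toFinite _) fun e he => ?_
    · exact List.nodup_append.mpr ⟨hp.edges_nodup, hsub.nodup hq.edges_nodup,
        fun e he e' he' h => hdisj e he (h ▸ he')⟩
    · rcases List.mem_append.mp he with he | he
      exacts [p.edges_subset_edgeSet he, r.edges_subset_edgeSet he]
  have hsplit := congrArg Walk.length (p.take_spec hxp)
  rw [Walk.length_append] at hsplit
  have hu := dist_le (p.takeUntil x hxp)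
  have hv := dist_le (p.dropUntil x hxp).reverse
  have hw := dist_le r
  rw [Walk.length_reverse] at hv
  exact ⟨x, by omega⟩

theorem Subgraph.Connected.exists_dist_add_dist_add_dist_le_ncard_edgeSet [Finite V]
    {H : G.Subgraph} (hH : H.Connected) {u v w : V} (hu : u ∈ H.verts) (hv : v ∈ H.verts)
    (hw : w ∈ H.verts) : ∃ x, G.dist u x + G.dist v x + G.dist w x ≤ H.edgeSet.ncard := by
  obtain ⟨x, hx⟩ :=
    hH.coe.exists_dist_add_dist_add_dist_le_ncard_edgeSet ⟨u, hu⟩ ⟨v, hv⟩ ⟨w, hw⟩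
  have hcard : H.coe.edgeSet.ncard = H.edgeSet.ncard := by
    rw [← H.image_coe_edgeSet_coe]
    exact (Set.ncard_image_of_injective _ (Sym2.map.injective Subtype.val_injective)).symm
  have hdist {a : V} (ha : a ∈ H.verts) : G.dist a x ≤ H.coe.dist ⟨a, ha⟩ x :=
    (hH.coe.preconnected ⟨a, ha⟩ x).dist_map_le H.hom
  have := hdist hu
  have := hdist hv
  have := hdist hw
  exact ⟨x, by omega⟩

theorem Connected.dist_add_dist_add_dist_le_two_mul (hG : G.Connected) (u v w x : V) :
    G.dist u v + G.dist u w + G.dist v w ≤ 2 * (G.dist u x + G.dist v x + G.dist w x) := by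
  have := hG.dist_triangle (u := u) (v := x) (w := v)
  have := hG.dist_triangle (u := v) (v := x) (w := w)
  have := hG.dist_triangle (u := u) (v := x) (w := w)
  rw [dist_comm (u := x) (v := v), dist_comm (u := x) (v := w)] at *
  omega

theorem Connected.mem_interval_inter_iff (hG : G.Connected) {u v w x : V} :
    x ∈ interval G u v ∩ interval G u w ∩ interval G v w ↔
      2 * (G.dist u x + G.dist v x + G.dist w x) = G.dist u v + G.dist u w + G.dist v w := by
  have := hG.dist_triangle (u := u) (v := x) (w := v)
  have := hG.dist_triangle (u := v) (v := x) (w := w)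
  have := hG.dist_triangle (u := u) (v := x) (w := w)
  simp only [interval, Set.mem_inter_iff, Set.mem_ofPred_eq]
  rw [dist_comm (u := x) (v := v), dist_comm (u := x) (v := w)] at *
  omega

end SimpleGraph

section Steiner

variable {V : Type*} {G : SimpleGraph V}

theorem steinerDist_le_ncard_edgeSet {S : Set V} {H : G.Subgraph} (hH : H.Connected)
    (hS : S ⊆ H.verts) : steinerDist G S ≤ H.edgeSet.ncard :=
  Nat.sInf_le ⟨H, hH, hS, rfl⟩

theorem SimpleGraph.Connected.exists_subgraph_ncard_edgeSet_eq_steinerDist (hG : G.Connected)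
    (S : Set V) :
    ∃ H : G.Subgraph, H.Connected ∧ S ⊆ H.verts ∧ H.edgeSet.ncard = steinerDist G S := by
  have htop : (⊤ : G.Subgraph).Connected :=
    Subgraph.connected_iff'.mpr (Subgraph.topIso.connected_iff.mpr hG)
  exact Nat.sInf_mem
    (s := {n | ∃ H : G.Subgraph, H.Connected ∧ S ⊆ H.verts ∧ H.edgeSet.ncard = n})
    ⟨_, ⊤, htop, fun _ _ => trivial, rfl⟩

theorem SimpleGraph.Connected.exists_dist_add_dist_add_dist_le_steinerDist [Finite V]
    (hG : G.Connected) (u v w : V) :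
    ∃ x, G.dist u x + G.dist v x + G.dist w x ≤ steinerDist G {u, v, w} := by
  obtain ⟨H, hH, hS, hcard⟩ := hG.exists_subgraph_ncard_edgeSet_eq_steinerDist {u, v, w}
  rw [← hcard]
  exact hH.exists_dist_add_dist_add_dist_le_ncard_edgeSet (hS (by simp)) (hS (by simp))
    (hS (by simp))

theorem SimpleGraph.Connected.steinerDist_le_dist_add_dist_add_dist (hG : G.Connected)
    (u v w x : V) : steinerDist G {u, v, w} ≤ G.dist u x + G.dist v x + G.dist w x := by
  obtain ⟨pu, hpu⟩ := hG.exists_walk_length_eq_dist u x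
  obtain ⟨pv, hpv⟩ := hG.exists_walk_length_eq_dist v x
  obtain ⟨pw, hpw⟩ := hG.exists_walk_length_eq_dist w x
  have hconn : (pu.toSubgraph ⊔ pv.toSubgraph ⊔ pw.toSubgraph).Connected :=
    Subgraph.connected_sup
      (Subgraph.connected_sup pu.toSubgraph_connected.preconnected
        pv.toSubgraph_connected.preconnected
        ⟨x, pu.end_mem_verts_toSubgraph, pv.end_mem_verts_toSubgraph⟩).preconnected
      pw.toSubgraph_connected.preconnected
      ⟨x, Or.inl pu.end_mem_verts_toSubgraph, pw.end_mem_verts_toSubgraph⟩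
  have hS : {u, v, w} ⊆ (pu.toSubgraph ⊔ pv.toSubgraph ⊔ pw.toSubgraph).verts := by
    rintro y (rfl | rfl | rfl)
    exacts [Or.inl (Or.inl pu.start_mem_verts_toSubgraph),
      Or.inl (Or.inr pv.start_mem_verts_toSubgraph), Or.inr pw.start_mem_verts_toSubgraph]
  refine (steinerDist_le_ncard_edgeSet hconn hS).trans ?_
  simp only [Subgraph.edgeSet_sup, Walk.edgeSet_toSubgraph]
  have := Set.ncard_union_le (pu.edgeSet ∪ pv.edgeSet) pw.edgeSet
  have := Set.ncard_union_le pu.edgeSet pv.edgeSet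
  have := pu.ncard_edgeSet_le_length
  have := pv.ncard_edgeSet_le_length
  have := pw.ncard_edgeSet_le_length
  omega

theorem SimpleGraph.Connected.dist_add_dist_add_dist_le_two_mul_steinerDist [Finite V]
    (hG : G.Connected) (u v w : V) :
    G.dist u v + G.dist u w + G.dist v w ≤ 2 * steinerDist G {u, v, w} := by
  obtain ⟨x, hx⟩ := hG.exists_dist_add_dist_add_dist_le_steinerDist u v w
  have := hG.dist_add_dist_add_dist_le_two_mul u v w x
  omega

theorem SimpleGraph.Connected.two_mul_steinerDist_eq_iff [Finite V] (hG : G.Connected)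
    (u v w : V) : 2 * steinerDist G {u, v, w} = G.dist u v + G.dist u w + G.dist v w ↔
      (interval G u v ∩ interval G u w ∩ interval G v w).Nonempty := by
  constructor
  · intro h
    obtain ⟨x, hx⟩ := hG.exists_dist_add_dist_add_dist_le_steinerDist u v w
    have := hG.dist_add_dist_add_dist_le_two_mul u v w x
    exact ⟨x, hG.mem_interval_inter_iff.mpr (by omega)⟩
  · rintro ⟨x, hx⟩
    have := hG.mem_interval_inter_iff.mp hx
    have := hG.steinerDist_le_dist_add_dist_add_dist u v w x
    have := hG.dist_add_dist_add_dist_le_two_mul_steinerDist u v w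
    omega

end Steiner

namespace Finset

theorem sum_sym2_triple {α M : Type*} [DecidableEq α] [AddCommMonoid M] (f : Sym2 α → M)
    (hf : ∀ a, f s(a, a) = 0) {a b c : α} (hab : a ≠ b) (hac : a ≠ c) (hbc : b ≠ c) :
    ∑ p ∈ ({a, b, c} : Finset α).sym2, f p = f s(a, b) + f s(a, c) + f s(b, c) := by
  have hb : b ∉ ({c} : Finset α) := by simpa using hbc
  have ha : a ∉ ({b, c} : Finset α) := by simp [hab, hac]
  rw [← cons_eq_insert _ _ ha, sym2_cons, sum_disjUnion, sum_map, sum_cons,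
    ← cons_eq_insert _ _ hb, sym2_cons, sum_disjUnion]
  simp [hf, add_assoc, hbc, Sym2.diag]

theorem sum_powersetCard_three_sum_sym2 {α M : Type*} [Fintype α] [DecidableEq α]
    [AddCommMonoid M] (f : Sym2 α → M) (hf : ∀ a, f s(a, a) = 0) :
    ∑ S ∈ univ.powersetCard 3, ∑ p ∈ S.sym2, f p =
      (Fintype.card α - 2) • ∑ p ∈ univ.sym2, f p := by
  rw [sum_comm' (t' := univ.sym2) (s' := fun p => (univ.powersetCard 3).filter (p ∈ ·.sym2))
    (by simp), smul_sum]
  refine sum_congr rfl fun p _ => ?_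
  induction p with
  | h a b =>
    rw [sum_const]
    by_cases hab : a = b
    · simp [hab, hf]
    have hfilter : (univ.powersetCard 3).filter (s(a, b) ∈ ·.sym2) =
        (univ.powersetCard 3).filter ({a, b} ⊆ ·) := by
      ext S; simp [insert_subset_iff]
    rw [hfilter, card_filter_powersetCard_subset _ _ _ (subset_univ _) (by simp [card_pair hab]),
      card_pair hab, card_univ, Nat.choose_one_right]

end Finset

section Wiener

variable {V : Type*} {G : SimpleGraph V}

noncomputable def SimpleGraph.sym2Dist (G : SimpleGraph V) : Sym2 V → ℕ :=
  Sym2.lift ⟨fun u v => G.dist u v, fun _ _ => dist_comm⟩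

theorem wienerIndex_eq_sum_sym2Dist [Fintype V] :
    wienerIndex G = ∑ p ∈ (Finset.univ : Finset V).sym2, G.sym2Dist p :=
  rfl

theorem wienerIndex_eq_zero_of_card_le_one [Fintype V] (h : Fintype.card V ≤ 1) :
    wienerIndex G = 0 :=
  Finset.sum_eq_zero fun p _ => by
    induction p with
    | h a b => simp [Fintype.card_le_one_iff.mp h a b]

theorem card_sub_two_mul_wienerIndex_eq_sum [Fintype V] [DecidableEq V] :
    (Fintype.card V - 2) * wienerIndex G =
      ∑ S ∈ Finset.univ.powersetCard 3, ∑ p ∈ S.sym2, G.sym2Dist p := by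
  rw [Finset.sum_powersetCard_three_sum_sym2 _ fun a => dist_self, smul_eq_mul,
    wienerIndex_eq_sum_sym2Dist]

theorem sum_sym2_sym2Dist_triple [DecidableEq V] {u v w : V} (huv : u ≠ v) (huw : u ≠ w)
    (hvw : v ≠ w) :
    ∑ p ∈ ({u, v, w} : Finset V).sym2, G.sym2Dist p = G.dist u v + G.dist u w + G.dist v w :=
  Finset.sum_sym2_triple _ (fun _ => dist_self) huv huw hvw

end Wiener

section Modular

variable {V : Type*} {G : SimpleGraph V}

theorem left_mem_interval (u v : V) : u ∈ interval G u v := by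
  simp [interval]

theorem right_mem_interval (u v : V) : v ∈ interval G u v := by
  simp [interval]

theorem isModular_iff_of_ne : IsModular G ↔ ∀ x y z : V, x ≠ y → x ≠ z → y ≠ z →
    (interval G x y ∩ interval G x z ∩ interval G y z).Nonempty := by
  refine ⟨fun h x y z _ _ _ => h x y z, fun h x y z => ?_⟩
  by_cases hxy : x = y
  · subst hxy
    exact ⟨x, ⟨left_mem_interval x x, left_mem_interval x z⟩, left_mem_interval x z⟩
  by_cases hxz : x = z
  · subst hxz
    exact ⟨x, ⟨left_mem_interval x y, left_mem_interval x x⟩, right_mem_interval y x⟩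
  by_cases hyz : y = z
  · subst hyz
    exact ⟨y, ⟨right_mem_interval x y, right_mem_interval x y⟩, left_mem_interval y y⟩
  exact h x y z hxy hxz hyz

end Modular

section Main

variable {V : Type*} [Fintype V] {G : SimpleGraph V}

theorem sum_sym2_sym2Dist_le_two_mul_steinerDist [DecidableEq V] (hG : G.Connected)
    {S : Finset V} (hS : S.card = 3) :
    ∑ p ∈ S.sym2, G.sym2Dist p ≤ 2 * steinerDist G S := by
  obtain ⟨u, v, w, huv, huw, hvw, rfl⟩ := Finset.card_eq_three.mp hS
  rw [sum_sym2_sym2Dist_triple huv huw hvw]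
  push_cast
  exact hG.dist_add_dist_add_dist_le_two_mul_steinerDist u v w

theorem card_sub_two_mul_wienerIndex_le_two_mul_steinerWiener (hG : G.Connected) :
    (Fintype.card V - 2) * wienerIndex G ≤ 2 * steinerWiener G 3 := by
  classical
  rw [card_sub_two_mul_wienerIndex_eq_sum, steinerWiener, Finset.mul_sum]
  exact Finset.sum_le_sum fun S hS =>
    sum_sym2_sym2Dist_le_two_mul_steinerDist hG (Finset.mem_powersetCard_univ.mp hS)

theorem card_sub_two_mul_wienerIndex_eq_two_mul_steinerWiener_iff (hG : G.Connected) :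
    (Fintype.card V - 2) * wienerIndex G = 2 * steinerWiener G 3 ↔ IsModular G := by
  classical
  rw [card_sub_two_mul_wienerIndex_eq_sum, steinerWiener, Finset.mul_sum,
    Finset.sum_eq_sum_iff_of_le fun S hS =>
      sum_sym2_sym2Dist_le_two_mul_steinerDist hG (Finset.mem_powersetCard_univ.mp hS),
    isModular_iff_of_ne]
  have htriple {u v w : V} (huv : u ≠ v) (huw : u ≠ w) (hvw : v ≠ w) :
      ∑ p ∈ ({u, v, w} : Finset V).sym2, G.sym2Dist p =
          2 * steinerDist G ({u, v, w} : Finset V) ↔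
        (interval G u v ∩ interval G u w ∩ interval G v w).Nonempty := by
    rw [sum_sym2_sym2Dist_triple huv huw hvw, eq_comm, Finset.coe_insert, Finset.coe_pair,
      hG.two_mul_steinerDist_eq_iff]
  refine ⟨fun h u v w huv huw hvw => (htriple huv huw hvw).mp (h _ ?_), fun h S hS => ?_⟩
  · exact Finset.mem_powersetCard_univ.mpr
      (Finset.card_eq_three.mpr ⟨u, v, w, huv, huw, hvw, rfl⟩)
  · obtain ⟨u, v, w, huv, huw, hvw, rfl⟩ :=
      Finset.card_eq_three.mp (Finset.mem_powersetCard_univ.mp hS)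
    exact (htriple huv huw hvw).mpr (h u v w huv huw hvw)

theorem cast_card_sub_two_mul_wienerIndex :
    (((Fintype.card V - 2) * wienerIndex G : ℕ) : ℝ) =
      ((Fintype.card V : ℝ) - 2) * wienerIndex G := by
  by_cases h : 2 ≤ Fintype.card V
  · push_cast [Nat.cast_sub h]; rfl
  · simp [wienerIndex_eq_zero_of_card_le_one (by omega : Fintype.card V ≤ 1)]

end Main

/-- For a connected graph `G` on `n` vertices, `SW_3(G) ≥ ((n-2)/2)·W(G)`, with
equality if and only if `G` is modular. -/
theorem steinerWiener_three_ge_wiener {V : Type*} (G : SimpleGraph V) [Fintype V]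
    (hG : G.Connected) :
    (steinerWiener G 3 : ℝ) ≥ ((Fintype.card V : ℝ) - 2) / 2 * wienerIndex G ∧
      ((steinerWiener G 3 : ℝ) = ((Fintype.card V : ℝ) - 2) / 2 * wienerIndex G ↔
        IsModular G) := by
  have hcast : ((Fintype.card V : ℝ) - 2) / 2 * wienerIndex G =
      (((Fintype.card V - 2) * wienerIndex G : ℕ) : ℝ) / 2 := by
    rw [cast_card_sub_two_mul_wienerIndex]; ring
  rw [hcast, ← card_sub_two_mul_wienerIndex_eq_two_mul_steinerWiener_iff hG, ge_iff_le,
    div_le_iff₀ two_pos, eq_div_iff two_ne_zero]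
  have hle := card_sub_two_mul_wienerIndex_le_two_mul_steinerWiener hG
  constructor
  · exact_mod_cast hle.trans_eq (mul_comm _ _)
  · rw [mul_comm (steinerWiener G 3 : ℝ), eq_comm]
    norm_cast
end

section
/- Let G and H be connected graphs. Then W(G □ H) = |V(G)|² · W(H) + |V(H)|² · W(G). -/
/-! Distances add up coordinatewise in a box product, and a sum over unordered pairs is half
the sum over ordered pairs once the diagonal vanishes; so both sides of the formula, doubled,
are the same fourfold sum `∑ a x b y, (d_G(a, b) + d_H(x, y))`. -/

open SimpleGraph Finset

theorem Finset.sum_sum_add_sum_diag_eq_two_nsmul_sum_sym2 {ι M : Type*} [AddCommMonoid M]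
    (f : {f : ι → ι → M // ∀ a b, f a b = f b a}) (s : Finset ι) :
    ∑ a ∈ s, ∑ b ∈ s, f.1 a b + ∑ a ∈ s, f.1 a a = 2 • ∑ p ∈ s.sym2, Sym2.lift f p := by
  induction s using Finset.cons_induction with
  | empty => simp
  | cons a s ha ih =>
    have hrow : ∑ x ∈ s, f.1 x a = ∑ b ∈ s, f.1 a b := sum_congr rfl fun x _ => f.2 x a
    rw [sym2_cons, sum_disjUnion, sum_map, nsmul_add, ← ih]
    simp only [sum_cons, sum_add_distrib, Sym2.mkEmbedding_apply, Sym2.lift_mk, hrow]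
    abel

namespace SimpleGraph

variable {α β : Type*} {G : SimpleGraph α} {H : SimpleGraph β}

theorem dist_boxProd {x y : α × β} (hG : G.Reachable x.1 y.1) (hH : H.Reachable x.2 y.2) :
    (G □ H).dist x y = G.dist x.1 y.1 + H.dist x.2 y.2 := by
  rw [dist, dist, dist, edist_boxProd, ENat.toNat_add (edist_ne_top_iff_reachable.mpr hG)
    (edist_ne_top_iff_reachable.mpr hH)]

theorem two_mul_wienerIndex [Fintype α] (G : SimpleGraph α) :
    2 * wienerIndex G = ∑ u, ∑ v, G.dist u v := by
  have := Finset.sum_sum_add_sum_diag_eq_two_nsmul_sum_sym2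
    ⟨fun u v => G.dist u v, fun _ _ => dist_comm⟩ univ
  simpa [wienerIndex] using this.symm

theorem sum_sum_dist_boxProd [Fintype α] [Fintype β] (hG : G.Preconnected)
    (hH : H.Preconnected) :
    ∑ z, ∑ w, (G □ H).dist z w =
      Fintype.card β ^ 2 * ∑ a, ∑ b, G.dist a b + Fintype.card α ^ 2 * ∑ x, ∑ y, H.dist x y :=
  calc ∑ z, ∑ w, (G □ H).dist z w
      = ∑ a, ∑ x, ∑ b, ∑ y, (G.dist a b + H.dist x y) := by
        simp only [Fintype.sum_prod_type, dist_boxProd (hG _ _) (hH _ _)]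
    _ = _ := by
        simp only [sum_add_distrib, sum_const, card_univ, smul_eq_mul, ← mul_sum]
        ring

end SimpleGraph

/-- For connected graphs `G` and `H`,
`W(G □ H) = |V(G)|²·W(H) + |V(H)|²·W(G)`. -/
theorem wienerIndex_boxProd {α β : Type*} (G : SimpleGraph α) (H : SimpleGraph β)
    [Fintype α] [Fintype β] (hG : G.Connected) (hH : H.Connected) :
    wienerIndex (G.boxProd H) =
      (Fintype.card α) ^ 2 * wienerIndex H + (Fintype.card β) ^ 2 * wienerIndex G := by
  have key := two_mul_wienerIndex (G □ H)
  rw [sum_sum_dist_boxProd hG.preconnected hH.preconnected, ← two_mul_wienerIndex,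
    ← two_mul_wienerIndex] at key
  linarith
end

section
/- Let G be a connected graph on n vertices and let k be an integer with 3 ≤ k ≤ n. Then μ_k(G) ≤ (k − 1) · μ(G). -/
/-- The average `k`-Steiner distance of `G`: the average of the Steiner distances of
all `k`-element subsets of vertices of `G`. -/
noncomputable def avgSteinerDist {V : Type*} (G : SimpleGraph V) [Fintype V] (k : ℕ) : ℝ :=
  (steinerWiener G k : ℝ) / ((Fintype.card V).choose k)


open Finset

namespace Finset

variable {α M : Type*} [DecidableEq α] [AddCommMonoid M]

theorem sum_powersetCard_sum_powersetCard (t : Finset α) {j k : ℕ} (hjk : j ≤ k)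
    (f : Finset α → M) :
    ∑ S ∈ t.powersetCard k, ∑ P ∈ S.powersetCard j, f P =
      (#t - j).choose (k - j) • ∑ P ∈ t.powersetCard j, f P := by
  rw [sum_comm' (t' := t.powersetCard j) (s' := fun P => (t.powersetCard k).filter (P ⊆ ·)),
    smul_sum]
  · refine sum_congr rfl fun P hP => ?_
    obtain ⟨hPt, hPj⟩ := mem_powersetCard.1 hP
    rw [sum_const, card_filter_powersetCard_subset P t k hPt (hPj ▸ hjk), hPj]
  · intro S P
    simp only [mem_powersetCard, mem_filter]
    constructor
    · rintro ⟨⟨hSt, hSk⟩, hPS, hPj⟩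
      exact ⟨⟨⟨hSt, hSk⟩, hPS⟩, hPS.trans hSt, hPj⟩
    · rintro ⟨⟨⟨hSt, hSk⟩, hPS⟩, -, hPj⟩
      exact ⟨⟨hSt, hSk⟩, hPS, hPj⟩

theorem sum_sum_filter_mem_powersetCard_two (s : Finset α) (f : Finset α → M) :
    ∑ v ∈ s, ∑ P ∈ s.powersetCard 2 with v ∈ P, f P = 2 • ∑ P ∈ s.powersetCard 2, f P := by
  rw [sum_comm' (t' := s.powersetCard 2) (s' := id), smul_sum]
  · refine sum_congr rfl fun P hP => ?_
    rw [id, sum_const, (mem_powersetCard.1 hP).2]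
  · intro v P
    simp only [mem_filter, mem_powersetCard, id]
    exact ⟨fun ⟨_, hP, hvP⟩ => ⟨hvP, hP⟩, fun ⟨hvP, hP⟩ => ⟨hP.1 hvP, hP, hvP⟩⟩

end Finset

namespace SimpleGraph

variable {V : Type*} {G : SimpleGraph V}

theorem steinerDist_le_ncard {S : Set V} {H : G.Subgraph} (hH : H.Connected)
    (hS : S ⊆ H.verts) : steinerDist G S ≤ H.edgeSet.ncard :=
  Nat.sInf_le ⟨H, hH, hS, rfl⟩

theorem Connected.exists_subgraph_steinerDist (hG : G.Connected) (S : Set V) :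
    ∃ H : G.Subgraph, H.Connected ∧ S ⊆ H.verts ∧ H.edgeSet.ncard = steinerDist G S :=
  Nat.sInf_mem (s := {n | ∃ H : G.Subgraph, H.Connected ∧ S ⊆ H.verts ∧ H.edgeSet.ncard = n})
    ⟨_, ⊤, Subgraph.connected_iff'.2 (Subgraph.topIso.connected_iff.2 hG),
    Set.subset_univ S, rfl⟩

theorem steinerDist_singleton (v : V) : steinerDist G {v} = 0 := by
  simpa [edgeSet_singletonSubgraph] using
    steinerDist_le_ncard (Subgraph.singletonSubgraph_connected (G := G) (v := v))
      (by simp : {v} ⊆ (G.singletonSubgraph v).verts)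

namespace Connected

variable (hG : G.Connected)
include hG

theorem steinerDist_mono {S T : Set V} (hST : S ⊆ T) : steinerDist G S ≤ steinerDist G T := by
  obtain ⟨H, hH, hT, hcard⟩ := hG.exists_subgraph_steinerDist T
  exact hcard ▸ steinerDist_le_ncard hH (hST.trans hT)

theorem steinerDist_union_le {S T : Set V} (hST : (S ∩ T).Nonempty) :
    steinerDist G (S ∪ T) ≤ steinerDist G S + steinerDist G T := by
  obtain ⟨H, hH, hS, hHcard⟩ := hG.exists_subgraph_steinerDist S
  obtain ⟨K, hK, hT, hKcard⟩ := hG.exists_subgraph_steinerDist T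
  obtain ⟨v, hvS, hvT⟩ := hST
  have hconn : (H ⊔ K).Connected :=
    Subgraph.connected_sup hH.preconnected hK.preconnected ⟨v, hS hvS, hT hvT⟩
  calc steinerDist G (S ∪ T)
      ≤ (H ⊔ K).edgeSet.ncard := steinerDist_le_ncard hconn (Set.union_subset_union hS hT)
    _ ≤ H.edgeSet.ncard + K.edgeSet.ncard := by
      rw [Subgraph.edgeSet_sup]; exact Set.ncard_union_le _ _
    _ = steinerDist G S + steinerDist G T := by rw [hHcard, hKcard]

theorem steinerDist_insert_biUnion_le {ι : Type*} [DecidableEq ι] (v : V) (s : Finset ι)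
    (A : ι → Set V) (hv : ∀ i ∈ s, v ∈ A i) :
    steinerDist G (insert v (⋃ i ∈ s, A i)) ≤ ∑ i ∈ s, steinerDist G (A i) := by
  induction s using Finset.induction with
  | empty => simp [steinerDist_singleton]
  | @insert a s ha ih =>
    have hva : v ∈ A a := hv a (mem_insert_self a s)
    have hunion : insert v (⋃ i ∈ insert a s, A i) = A a ∪ insert v (⋃ i ∈ s, A i) := by
      rw [set_biUnion_insert, Set.union_insert]
    rw [hunion, sum_insert ha]
    calc steinerDist G (A a ∪ insert v (⋃ i ∈ s, A i))
        ≤ steinerDist G (A a) + steinerDist G (insert v (⋃ i ∈ s, A i)) :=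
          hG.steinerDist_union_le ⟨v, hva, Set.mem_insert v _⟩
      _ ≤ steinerDist G (A a) + ∑ i ∈ s, steinerDist G (A i) :=
          Nat.add_le_add_left (ih fun i hi => hv i (mem_insert_of_mem hi)) _

variable [DecidableEq V]

theorem steinerDist_le_sum_pairs_mem {S : Finset V} {v : V} (hv : v ∈ S) :
    steinerDist G S ≤ ∑ P ∈ S.powersetCard 2 with v ∈ P, steinerDist G P := by
  refine (hG.steinerDist_mono ?_).trans
    (hG.steinerDist_insert_biUnion_le v _ (fun P : Finset V => (P : Set V)) fun P hP =>
      (mem_filter.1 hP).2)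
  intro u hu
  by_cases huv : u = v
  · exact huv ▸ Set.mem_insert u _
  refine Set.mem_insert_of_mem _ (Set.mem_biUnion (x := {v, u}) ?_ (by simp))
  simp only [coe_filter, mem_powersetCard, Set.mem_ofPred_eq, mem_insert_self, and_true]
  exact ⟨insert_subset hv (singleton_subset_iff.2 hu), card_pair (Ne.symm huv)⟩

theorem card_mul_steinerDist_le (S : Finset V) :
    #S * steinerDist G S ≤ 2 * ∑ P ∈ S.powersetCard 2, steinerDist G P :=
  calc #S * steinerDist G S = ∑ _v ∈ S, steinerDist G S := by rw [sum_const, smul_eq_mul]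
    _ ≤ ∑ v ∈ S, ∑ P ∈ S.powersetCard 2 with v ∈ P, steinerDist G P :=
      sum_le_sum fun _v hv => hG.steinerDist_le_sum_pairs_mem hv
    _ = 2 * ∑ P ∈ S.powersetCard 2, steinerDist G P :=
      sum_sum_filter_mem_powersetCard_two S _

theorem mul_steinerWiener_le [Fintype V] {k : ℕ} (hk : 2 ≤ k) :
    k * steinerWiener G k ≤ 2 * (Fintype.card V - 2).choose (k - 2) * steinerWiener G 2 := by
  calc k * steinerWiener G k = ∑ S ∈ univ.powersetCard k, #S * steinerDist G S := by
        rw [steinerWiener, mul_sum]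
        exact sum_congr rfl fun S hS => by rw [(mem_powersetCard.1 hS).2]
    _ ≤ ∑ S ∈ univ.powersetCard k, 2 * ∑ P ∈ S.powersetCard 2, steinerDist G P :=
        sum_le_sum fun S _ => hG.card_mul_steinerDist_le S
    _ = 2 * (Fintype.card V - 2).choose (k - 2) * steinerWiener G 2 := by
        rw [← mul_sum, sum_powersetCard_sum_powersetCard univ hk, card_univ, smul_eq_mul,
          steinerWiener, mul_assoc]

end Connected

end SimpleGraph

/-- For a connected graph `G` on `n` vertices and `3 ≤ k ≤ n`,
`μ_k(G) ≤ (k − 1)·μ(G)`, where `μ(G) = μ_2(G)` is the average distance. -/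
theorem avgSteinerDist_le_mul_avgDist {V : Type*} (G : SimpleGraph V) [Fintype V]
    (hG : G.Connected) (k : ℕ) (hk3 : 3 ≤ k) (hk : k ≤ Fintype.card V) :
    avgSteinerDist G k ≤ ((k : ℝ) - 1) * avgSteinerDist G 2 := by
  classical
  set n := Fintype.card V
  have hW : (k : ℝ) * steinerWiener G k ≤ 2 * (n - 2).choose (k - 2) * steinerWiener G 2 := by
    exact_mod_cast hG.mul_steinerWiener_le (by omega)
  have hchoose : (n.choose k : ℝ) * (k * (k - 1) / 2) = n.choose 2 * (n - 2).choose (k - 2) := by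
    rw [← Nat.cast_choose_two]; exact_mod_cast Nat.choose_mul (n := n) (by omega : 2 ≤ k)
  have hnk : (0 : ℝ) < n.choose k := by exact_mod_cast Nat.choose_pos hk
  have hn2 : (0 : ℝ) < n.choose 2 := by exact_mod_cast Nat.choose_pos (by omega)
  have hk0 : (0 : ℝ) < k := Nat.cast_pos.2 (by omega)
  rw [avgSteinerDist, avgSteinerDist, mul_div_assoc', div_le_div_iff₀ hnk hn2]
  refine le_of_mul_le_mul_left ?_ hk0
  calc (k : ℝ) * (steinerWiener G k * n.choose 2)
      ≤ 2 * (n - 2).choose (k - 2) * steinerWiener G 2 * n.choose 2 := by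
        rw [← mul_assoc]; gcongr
    _ = k * ((k - 1) * steinerWiener G 2 * n.choose k) := by
        linear_combination -2 * (steinerWiener G 2 : ℝ) * hchoose
end

section
/- For any integer n ≥ 1, the Wiener index of the Lucas cube satisfies W(Λ_n) = n · F_{n−1} · F_{n+1}. -/
/-- The `n`-dimensional hypercube `Q_n`: vertices are binary strings of length `n`,
two strings being adjacent iff they differ in exactly one position. -/
def hypercube (n : ℕ) : SimpleGraph (Fin n → Bool) where
  Adj a b := (Finset.univ.filter fun i => a i ≠ b i).card = 1
  symm := by
    constructor
    intro a b h
    have hc : (Finset.univ.filter fun i => b i ≠ a i) =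
        (Finset.univ.filter fun i => a i ≠ b i) := by
      apply Finset.filter_congr
      intro i _
      simp [ne_comm]
    rw [hc]
    exact h
  loopless := by
    constructor
    intro a h
    simp at h

/-- A Fibonacci string of length `n`: a binary string with no two consecutive ones. -/
def fibWord (n : ℕ) (b : Fin n → Bool) : Prop :=
  ∀ i j : Fin n, (j : ℕ) = (i : ℕ) + 1 → ¬(b i = true ∧ b j = true)

instance (n : ℕ) : DecidablePred (fibWord n) := fun b =>
  inferInstanceAs (Decidable
    (∀ i j : Fin n, (j : ℕ) = (i : ℕ) + 1 → ¬(b i = true ∧ b j = true)))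

/-- The Fibonacci cube `Γ_n`: the subgraph of the hypercube `Q_n` induced by the
Fibonacci strings of length `n`. -/
def fibonacciCube (n : ℕ) : SimpleGraph {b : Fin n → Bool // fibWord n b} :=
  (hypercube n).comap Subtype.val
/-- A Lucas string of length `n`: a Fibonacci string whose first and last entries are
not both one. -/
def lucasWord (n : ℕ) (b : Fin n → Bool) : Prop :=
  fibWord n b ∧
    ∀ i j : Fin n, (i : ℕ) = 0 → (j : ℕ) = n - 1 → ¬(b i = true ∧ b j = true)

instance (n : ℕ) : DecidablePred (lucasWord n) := fun b =>
  inferInstanceAs (Decidable (fibWord n b ∧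
    ∀ i j : Fin n, (i : ℕ) = 0 → (j : ℕ) = n - 1 → ¬(b i = true ∧ b j = true)))

/-- The Lucas cube `Λ_n`: the subgraph of the hypercube `Q_n` induced by the Lucas
strings of length `n`. -/
def lucasCube (n : ℕ) : SimpleGraph {b : Fin n → Bool // lucasWord n b} :=
  (hypercube n).comap Subtype.val

/-- The Lucas numbers: `L_0 = 2`, `L_1 = 1`, `L_n = L_{n-1} + L_{n-2}`. -/
def lucasNum : ℕ → ℕ
  | 0 => 2
  | 1 => 1
  | n + 2 => lucasNum (n + 1) + lucasNum n

/-! Lucas strings form a down-set of `Q_n`: switching off a bit keeps a Lucas string Lucas.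
Hence between two Lucas strings there is a geodesic of `Q_n` inside `Λ_n` (first switch off,
then switch on the differing bits), so distances in `Λ_n` are Hamming distances. Summing
Hamming distances coordinatewise gives `W(Λ_n) = ∑ᵢ tᵢ fᵢ`, where `tᵢ` and `fᵢ` count the
Lucas strings with a `1`, resp. a `0`, at position `i`. Lucas strings are the cyclic Fibonacci
strings, so by rotation `tᵢ` and `fᵢ` do not depend on `i`. Deleting a leading `0` leaves an
arbitrary Fibonacci string of length `n - 1`, so `fᵢ = F_{n+1}`; a `1` at position `1` forces
zeros at positions `0` and `2` and leaves a Fibonacci string of length `n - 3`, so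
`tᵢ = F_{n-1}`. -/

open Finset

section Hamming

variable {ι β : Type*} [Fintype ι] [DecidableEq ι] [DecidableEq β]

theorem hammingDist_self_update_of_ne (x : ι → β) {i : ι} {b : β} (h : x i ≠ b) :
    hammingDist x (Function.update x i b) = 1 := by
  rw [hammingDist, card_eq_one]
  refine ⟨i, eq_singleton_iff_unique_mem.2 ⟨by simpa using h, fun j hj => ?_⟩⟩
  by_contra hji
  simp [Function.update_of_ne hji] at hj

theorem hammingDist_update_add_one (x y : ι → β) {i : ι} (h : x i ≠ y i) :
    hammingDist (Function.update x i (y i)) y + 1 = hammingDist x y := by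
  have hfilter : ({j | Function.update x i (y i) j ≠ y j} : Finset ι) =
      ({j | x j ≠ y j} : Finset ι).erase i := by
    ext j
    rcases eq_or_ne j i with rfl | hj
    · simp
    · simp [hj]
  rw [hammingDist, hammingDist, hfilter, card_erase_add_one (by simpa using h)]

end Hamming

theorem hypercube_adj_iff {n : ℕ} {a b : Fin n → Bool} :
    (hypercube n).Adj a b ↔ hammingDist a b = 1 := Iff.rfl

section LowerSet

variable {n : ℕ} {p : (Fin n → Bool) → Prop}

theorem hammingDist_le_walk_length {u v : {b // p b}}
    (w : ((hypercube n).comap Subtype.val).Walk u v) : hammingDist u.1 v.1 ≤ w.length := by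
  induction w with
  | nil => simp
  | @cons a b c hab _ ih =>
    have := hammingDist_triangle a.1 b.1 c.1
    rw [SimpleGraph.Walk.length_cons, ← hypercube_adj_iff.1 hab]
    omega

theorem exists_walk_length_eq_hammingDist (hp : IsLowerSet {b | p b}) (u v : {b // p b}) :
    ∃ w : ((hypercube n).comap Subtype.val).Walk u v, w.length = hammingDist u.1 v.1 := by
  induction hd : hammingDist u.1 v.1 generalizing u with
  | zero =>
    obtain rfl : u = v := Subtype.ext (hammingDist_eq_zero.1 hd)
    exact ⟨.nil, rfl⟩
  | succ d ih =>
    -- Switching off a bit of `u` stays below `u`; once `u ≤ v`, switching one on stays below `v`.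
    obtain ⟨i, hi, hpi⟩ : ∃ i, u.1 i ≠ v.1 i ∧ p (Function.update u.1 i (v.1 i)) := by
      by_cases hoff : ∃ i, u.1 i = true ∧ v.1 i = false
      · obtain ⟨i, hu, hv⟩ := hoff
        exact ⟨i, by simp [hu, hv], hp (by simp [hv]) u.2⟩
      · push Not at hoff
        obtain ⟨i, hi⟩ : ∃ i, u.1 i ≠ v.1 i :=
          Function.ne_iff.1 (hammingDist_ne_zero.1 (by simp [hd]))
        refine ⟨i, hi, hp (update_le_iff.2 ⟨le_rfl, fun j _ => ?_⟩) v.2⟩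
        exact Bool.le_iff_imp.2 fun hj => by simpa using hoff j hj
    have hadj : ((hypercube n).comap Subtype.val).Adj u ⟨_, hpi⟩ :=
      hammingDist_self_update_of_ne u.1 hi
    obtain ⟨w, hw⟩ := ih ⟨_, hpi⟩ <| Nat.succ_injective <|
      (hammingDist_update_add_one u.1 v.1 hi).trans hd
    exact ⟨.cons hadj w, by simp [hw]⟩

theorem dist_hypercube_comap_val_of_isLowerSet (hp : IsLowerSet {b | p b}) (u v : {b // p b}) :
    ((hypercube n).comap Subtype.val).dist u v = hammingDist u.1 v.1 := by
  obtain ⟨w, hw⟩ := exists_walk_length_eq_hammingDist hp u v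
  obtain ⟨w', hw'⟩ := SimpleGraph.Reachable.exists_walk_length_eq_dist ⟨w⟩
  exact le_antisymm (hw ▸ SimpleGraph.dist_le w) (hw' ▸ hammingDist_le_walk_length w')

end LowerSet

theorem two_nsmul_sum_sym2_lift {α M : Type*} [AddCommMonoid M] (s : Finset α) (f : α → α → M)
    (hf : ∀ a b, f a b = f b a) (hdiag : ∀ a, f a a = 0) :
    2 • ∑ z ∈ s.sym2, Sym2.lift ⟨f, hf⟩ z = ∑ a ∈ s, ∑ b ∈ s, f a b := by
  induction s using Finset.cons_induction with
  | empty => simp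
  | cons a s ha ih =>
    rw [sym2_cons, sum_disjUnion, sum_map]
    simp only [Sym2.mkEmbedding_apply, Sym2.lift_mk, sum_cons, hdiag, zero_add, nsmul_add, ih,
      sum_add_distrib, hf _ a]
    abel

theorem sum_card_filter_ne {V : Type*} [Fintype V] (a : V → Bool) :
    ∑ u, #{v | a u ≠ a v} = 2 * (#{u | a u = true} * #{u | a u = false}) := by
  have hcount (u : V) :
      #{v | a u ≠ a v} = if a u = true then #{v | a v = false} else #{v | a v = true} := by
    cases a u <;> simp
  simp only [hcount, sum_ite, sum_const, smul_eq_mul, Bool.not_eq_true]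
  ring

theorem wienerIndex_eq_sum_card_mul_card {V ι : Type*} [Fintype V] [Fintype ι]
    (G : SimpleGraph V) (f : V → ι → Bool) (hG : ∀ u v, G.dist u v = hammingDist (f u) (f v)) :
    wienerIndex G = ∑ i, #{u | f u i = true} * #{u | f u i = false} := by
  have hdouble := two_nsmul_sum_sym2_lift univ (fun u v => G.dist u v)
    (fun _ _ => SimpleGraph.dist_comm) (fun _ => SimpleGraph.dist_self)
  refine Nat.eq_of_mul_eq_mul_left two_pos ?_
  calc 2 * wienerIndex G = ∑ u, ∑ v, hammingDist (f u) (f v) := by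
        rw [← smul_eq_mul, wienerIndex, hdouble]
        simp only [hG]
    _ = ∑ u, ∑ i, #{v | f u i ≠ f v i} := by
        refine sum_congr rfl fun u _ => ?_
        simp only [hammingDist, card_filter]
        exact sum_comm
    _ = ∑ i, ∑ u, #{v | f u i ≠ f v i} := sum_comm
    _ = 2 * ∑ i, #{u | f u i = true} * #{u | f u i = false} := by
        simp only [sum_card_filter_ne, mul_sum]

theorem card_subtype_filter_val {α : Type*} [Fintype α] (p q : α → Prop) [DecidablePred p]
    [DecidablePred q] : #{u : {a // p a} | q u.1} = #{a | p a ∧ q a} := by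
  rw [← Fintype.card_subtype, ← Fintype.card_subtype]
  exact Fintype.card_congr (Equiv.subtypeSubtypeEquivSubtypeInter p q)

theorem card_filter_cons {α : Type*} [Fintype α] [DecidableEq α] {m : ℕ} (x : α)
    (P : (Fin (m + 1) → α) → Prop) [DecidablePred P] :
    #{b | P b ∧ b 0 = x} = #{t : Fin m → α | P (Fin.cons x t)} := by
  refine card_nbij' Fin.tail (fun t => (Fin.cons x t : Fin (m + 1) → α)) (fun b hb => ?_)
    (fun t ht => ?_) (fun b hb => ?_) (fun t _ => Fin.tail_cons (α := fun _ => α) x t)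
  · obtain ⟨hP, rfl⟩ : P b ∧ b 0 = x := by simpa using hb
    simpa using hP
  · simpa using ht
  · obtain ⟨-, rfl⟩ : P b ∧ b 0 = x := by simpa using hb
    exact Fin.cons_self_tail b

theorem fibWord_cons_iff {m : ℕ} (x : Bool) (t : Fin m → Bool) :
    fibWord (m + 1) (Fin.cons x t) ↔
      fibWord m t ∧ ∀ j : Fin m, (j : ℕ) = 0 → ¬(x = true ∧ t j = true) := by
  unfold fibWord
  constructor
  · intro h
    refine ⟨fun i j hij => ?_, fun j hj => ?_⟩
    · simpa using h i.succ j.succ (by simp [hij])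
    · simpa using h 0 j.succ (by simp [hj])
  · rintro ⟨ht, h0⟩ i j hij
    induction j using Fin.cases with
    | zero => simp at hij
    | succ j =>
      induction i using Fin.cases with
      | zero => simpa using h0 j (by simpa using hij)
      | succ i => simpa using ht i j (by simpa using hij)

theorem fibWord_cons_false_iff {m : ℕ} (t : Fin m → Bool) :
    fibWord (m + 1) (Fin.cons false t) ↔ fibWord m t := by
  simp [fibWord_cons_iff]

theorem fibWord_cons_true_iff {m : ℕ} (t : Fin (m + 1) → Bool) :
    fibWord (m + 2) (Fin.cons true t) ↔ fibWord (m + 1) t ∧ t 0 = false := by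
  rw [fibWord_cons_iff]
  refine and_congr_right' ⟨fun h => by simpa using h 0 rfl, ?_⟩
  rintro h j hj
  obtain rfl : j = 0 := Fin.ext hj
  simp [h]

theorem card_fibWord_and_apply_zero_false (m : ℕ) :
    #{b : Fin (m + 1) → Bool | fibWord (m + 1) b ∧ b 0 = false} =
      #{t : Fin m → Bool | fibWord m t} := by
  rw [card_filter_cons]
  exact congrArg card (filter_congr fun t _ => fibWord_cons_false_iff t)

theorem card_fibWord_and_apply_zero_true (m : ℕ) :
    #{b : Fin (m + 2) → Bool | fibWord (m + 2) b ∧ b 0 = true} =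
      #{t : Fin m → Bool | fibWord m t} := by
  rw [card_filter_cons, ← card_fibWord_and_apply_zero_false]
  exact congrArg card (filter_congr fun t _ => fibWord_cons_true_iff t)

theorem card_fibWord : ∀ m : ℕ, #{b : Fin m → Bool | fibWord m b} = Nat.fib (m + 2)
  | 0 => by decide
  | 1 => by decide
  | m + 2 => by
    rw [card_eq_sum_card_fiberwise (f := fun b => b 0) (t := univ) (fun _ _ => mem_univ _)]
    simp only [filter_filter, Fintype.sum_bool, card_fibWord_and_apply_zero_true,
      card_fibWord_and_apply_zero_false, card_fibWord m, card_fibWord (m + 1)]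
    rw [Nat.fib_add_two (n := m + 2)]

theorem isLowerSet_lucasWord (n : ℕ) : IsLowerSet {b : Fin n → Bool | lucasWord n b} := by
  rintro a b hba ⟨hfib, hwrap⟩
  have hone (i : Fin n) (h : b i = true) : a i = true := Bool.le_iff_imp.1 (hba i) h
  exact ⟨fun i j hij hc => hfib i j hij ⟨hone i hc.1, hone j hc.2⟩,
    fun i j hi hj hc => hwrap i j hi hj ⟨hone i hc.1, hone j hc.2⟩⟩

theorem lucasWord_cons_false_iff {m : ℕ} (t : Fin m → Bool) :
    lucasWord (m + 1) (Fin.cons false t) ↔ fibWord m t := by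
  rw [lucasWord, fibWord_cons_false_iff, and_iff_left_iff_imp]
  rintro - i j hi -
  obtain rfl : i = 0 := Fin.ext hi
  simp

theorem lucasWord_iff_forall_add_one {m : ℕ} (b : Fin (m + 1) → Bool) :
    lucasWord (m + 1) b ↔ ∀ i : Fin (m + 1), ¬(b i = true ∧ b (i + 1) = true) := by
  constructor
  · rintro ⟨hfib, hwrap⟩ i
    rcases eq_or_ne i (Fin.last m) with rfl | hi
    · rw [Fin.last_add_one, and_comm]
      exact hwrap 0 (Fin.last m) rfl rfl
    · exact hfib i (i + 1) (Fin.val_add_one_of_lt (Fin.lt_last_iff_ne_last.2 hi))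
  · intro h
    refine ⟨fun i j hij => ?_, fun i j hi hj => ?_⟩
    · obtain rfl : j = i + 1 := Fin.ext (by rw [Fin.val_add_one_of_lt' (by omega)]; exact hij)
      exact h i
    · obtain rfl : i = 0 := Fin.ext hi
      obtain rfl : j = Fin.last m := Fin.ext hj
      rw [and_comm, ← Fin.last_add_one m]
      exact h (Fin.last m)

theorem lucasWord_comp_add_right {m : ℕ} {b : Fin (m + 1) → Bool} (hb : lucasWord (m + 1) b)
    (k : Fin (m + 1)) : lucasWord (m + 1) (fun i => b (i + k)) := by
  rw [lucasWord_iff_forall_add_one] at hb ⊢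
  intro i
  rw [add_right_comm]
  exact hb (i + k)

theorem card_lucasWord_and_apply_eq {m : ℕ} (x : Bool) (i j : Fin (m + 1)) :
    #{b | lucasWord (m + 1) b ∧ b i = x} = #{b | lucasWord (m + 1) b ∧ b j = x} := by
  refine card_nbij' (fun b l => b (l + (i - j))) (fun b l => b (l - (i - j)))
    (fun b hb => ?_) (fun b hb => ?_) (fun b _ => by simp) (fun b _ => by simp)
  · obtain ⟨hluc, rfl⟩ : lucasWord (m + 1) b ∧ b i = x := by simpa using hb
    simpa using lucasWord_comp_add_right hluc (i - j)
  · obtain ⟨hluc, rfl⟩ : lucasWord (m + 1) b ∧ b j = x := by simpa using hb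
    simpa [sub_eq_add_neg] using lucasWord_comp_add_right hluc (-(i - j))

theorem card_lucasWord_and_apply_false (m : ℕ) (i : Fin (m + 1)) :
    #{b | lucasWord (m + 1) b ∧ b i = false} = Nat.fib (m + 2) := by
  rw [card_lucasWord_and_apply_eq false i 0, card_filter_cons, ← card_fibWord m]
  exact congrArg card (filter_congr fun t _ => lucasWord_cons_false_iff t)

theorem card_lucasWord_and_apply_true : ∀ (m : ℕ) (i : Fin (m + 1)),
    #{b | lucasWord (m + 1) b ∧ b i = true} = Nat.fib m
  | 0, i => by rw [card_lucasWord_and_apply_eq true i 0]; decide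
  | 1, i => by rw [card_lucasWord_and_apply_eq true i 0]; decide
  | m + 2, i => by
    have hzero : #{b | lucasWord (m + 3) b ∧ b 1 = true} =
        #{b | (lucasWord (m + 3) b ∧ b 1 = true) ∧ b 0 = false} := by
      refine congrArg card (filter_congr fun b _ => ⟨fun h => ⟨h, ?_⟩, And.left⟩)
      simpa [h.2] using h.1.1 0 1 rfl
    rw [card_lucasWord_and_apply_eq true i 1, hzero, card_filter_cons,
      ← card_fibWord m, ← card_fibWord_and_apply_zero_true]
    refine congrArg card (filter_congr fun t _ => ?_)
    rw [lucasWord_cons_false_iff]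
    rfl

theorem wienerIndex_lucasCube_general (n : ℕ) :
    wienerIndex (lucasCube n) = n * Nat.fib (n - 1) * Nat.fib (n + 1) := by
  rw [wienerIndex_eq_sum_card_mul_card (lucasCube n) Subtype.val
    (dist_hypercube_comap_val_of_isLowerSet (isLowerSet_lucasWord n))]
  have hcount (i : Fin n) (x : Bool) :
      #{u : {b // lucasWord n b} | u.1 i = x} = #{b | lucasWord n b ∧ b i = x} :=
    card_subtype_filter_val (lucasWord n) (fun b => b i = x)
  simp only [hcount]
  cases n with
  | zero => simp
  | succ m => simp [card_lucasWord_and_apply_true, card_lucasWord_and_apply_false, mul_assoc]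

/-- For any `n ≥ 1`, the Wiener index of the Lucas cube satisfies
`W(Λ_n) = n·F_{n−1}·F_{n+1}`. -/
theorem wienerIndex_lucasCube (n : ℕ) (hn : 1 ≤ n) :
    wienerIndex (lucasCube n) = n * Nat.fib (n - 1) * Nat.fib (n + 1) :=
  wienerIndex_lucasCube_general n
end
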